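/- arXiv:math/0105168 — 2 statements merged into one kernel-verified Lean document; each statement's English description precedes it below -/
import Mathlib

section
/- Under the ABS recursion H_{i+1} = H_i - (H_i a_i w_iᵀ H_i)/(w_iᵀ H_i a_i) with w_iᵀ H_i a_i ≠ 0, one has H_{i+1}ᵀ w_j = 0 for all j ≤ i. -/
open Matrix

private lemma abaffian_step {n : ℕ} (Hi : Matrix (Fin n) (Fin n) ℝ)
    (ai wi wj : Fin n → ℝ) :
    ((Hi - (wi ⬝ᵥ (Hi *ᵥ ai))⁻¹ • vecMulVec (Hi *ᵥ ai) (Hiᵀ *ᵥ wi))ᵀ *ᵥ wj)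
      = Hiᵀ *ᵥ wj -
        ((wi ⬝ᵥ (Hi *ᵥ ai))⁻¹ * ((Hi *ᵥ ai) ⬝ᵥ wj)) • (Hiᵀ *ᵥ wi) := by
  have h1 : ∀ u v : Fin n → ℝ, (vecMulVec u v)ᵀ = vecMulVec v u := by
    intro u v; ext k l; simp [vecMulVec_apply, mul_comm]
  have h2 : ∀ u v x : Fin n → ℝ, vecMulVec v u *ᵥ x = (u ⬝ᵥ x) • v := by
    intro u v x; ext k
    simp [mulVec, vecMulVec_apply, dotProduct, Finset.mul_sum, mul_comm, mul_left_comm]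
  rw [transpose_sub, transpose_smul, h1, sub_mulVec, smul_mulVec, h2, smul_smul]

/-- Under the Abaffian update of the ABS algorithm, `H (i+1)` annihilates
all previous vectors `a j`, `j ≤ i`. -/
theorem abs_abaffian_transpose_annihilates
    {n : ℕ} (H : ℕ → Matrix (Fin n) (Fin n) ℝ) (a w : ℕ → Fin n → ℝ)
    (hH1 : (H 1).det ≠ 0)
    (hw : ∀ i, 1 ≤ i → w i ⬝ᵥ (H i *ᵥ a i) ≠ 0)
    (hrec : ∀ i, 1 ≤ i →
      H (i + 1) = H i -
        (w i ⬝ᵥ (H i *ᵥ a i))⁻¹ • vecMulVec (H i *ᵥ a i) ((H i)ᵀ *ᵥ w i)) :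
    ∀ i, 1 ≤ i → ∀ j, 1 ≤ j → j ≤ i → (H (i + 1))ᵀ *ᵥ w j = 0 := by
  have diag : ∀ i, 1 ≤ i → (H (i + 1))ᵀ *ᵥ w i = 0 := by
    intro i hi
    rw [hrec i hi, abaffian_step]
    rw [dotProduct_comm, inv_mul_cancel₀ (by rw [dotProduct_comm]; exact hw i hi)]
    simp
  have off : ∀ i, 1 ≤ i → ∀ j, (H i)ᵀ *ᵥ w j = 0 → (H (i + 1))ᵀ *ᵥ w j = 0 := by
    intro i hi j hz
    rw [hrec i hi, abaffian_step, hz]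
    have : (H i *ᵥ a i) ⬝ᵥ w j = 0 := by
      rw [dotProduct_comm, dotProduct_mulVec, ← mulVec_transpose, hz, zero_dotProduct]
    rw [this]
    simp
  intro i hi
  induction i, hi using Nat.le_induction with
  | base =>
    intro j hj hj1
    have : j = 1 := le_antisymm hj1 hj
    subst this
    exact diag 1 le_rfl
  | succ i hi ih =>
    intro j hj hji
    rcases eq_or_lt_of_le hji with h | h
    · rw [h]; exact diag (i + 1) (by omega)
    · exact off (i + 1) (by omega) j (ih j hj (by omega))
end

section
/- In the ABS algorithm applied to a consistent system a_iᵀ x = b_i (i = 1,…,m), the iterate x_{i+1} = x_i - α_i p_i with α_i = (a_iᵀ x_i - b_i)/(a_iᵀ p_i) satisfies a_jᵀ x_{i+1} = b_j for all j ≤ i. -/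
open Matrix

lemma vecMulVec_mulVec' {n : ℕ} (u v x : Fin n → ℝ) :
    vecMulVec u v *ᵥ x = (v ⬝ᵥ x) • u := by
  funext k
  simp [vecMulVec, mulVec, dotProduct, Finset.mul_sum, mul_comm, mul_assoc, mul_left_comm]

lemma abs_key {n : ℕ} (H : ℕ → Matrix (Fin n) (Fin n) ℝ) (a w : ℕ → Fin n → ℝ)
    (hw : ∀ i, 1 ≤ i → w i ⬝ᵥ (H i *ᵥ a i) ≠ 0)
    (hrecH : ∀ i, 1 ≤ i →
      H (i + 1) = H i -
        (w i ⬝ᵥ (H i *ᵥ a i))⁻¹ • vecMulVec (H i *ᵥ a i) ((H i)ᵀ *ᵥ w i)) :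
    ∀ i, 1 ≤ i → ∀ j, 1 ≤ j → j ≤ i → H (i + 1) *ᵥ a j = 0 := by
  intro i
  induction i with
  | zero => omega
  | succ k ih =>
    intro hk j hj1 hji
    have hk1 : 1 ≤ k + 1 := hk
    have hstep : ∀ v : Fin n → ℝ,
        H (k + 2) *ᵥ v = H (k+1) *ᵥ v -
          ((w (k+1) ⬝ᵥ (H (k+1) *ᵥ a (k+1)))⁻¹ * (w (k+1) ⬝ᵥ (H (k+1) *ᵥ v))) •
            (H (k+1) *ᵥ a (k+1)) := by
      intro v
      rw [hrecH (k+1) hk1, sub_mulVec, smul_mulVec, vecMulVec_mulVec']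
      congr 1
      rw [smul_smul]
      congr 2
      rw [dotProduct_mulVec, mulVec_transpose]
    rcases eq_or_lt_of_le hji with h | h
    · subst h
      rw [hstep]
      rw [inv_mul_cancel₀ (hw (k+1) hk1), one_smul, sub_self]
    · have hjk : j ≤ k := by omega
      have hk0 : 1 ≤ k := by omega
      have h0 : H (k + 1) *ᵥ a j = 0 := ih hk0 j hj1 hjk
      rw [hstep, h0, dotProduct_zero, mul_zero, zero_smul, sub_zero]

/-- In the ABS algorithm, the iterate `x (i+1)` solves the first `i` equations
`a j ⬝ᵥ x = b j`, `j ≤ i`. -/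
theorem abs_iterate_solves_first_equations
    {n : ℕ} (H : ℕ → Matrix (Fin n) (Fin n) ℝ) (a w z p : ℕ → Fin n → ℝ)
    (b : ℕ → ℝ) (x : ℕ → Fin n → ℝ) (α : ℕ → ℝ)
    (hH1 : (H 1).det ≠ 0)
    (hw : ∀ i, 1 ≤ i → w i ⬝ᵥ (H i *ᵥ a i) ≠ 0)
    (hz : ∀ i, 1 ≤ i → z i ⬝ᵥ (H i *ᵥ a i) ≠ 0)
    (hp : ∀ i, 1 ≤ i → p i = (H i)ᵀ *ᵥ z i)
    (hrecH : ∀ i, 1 ≤ i →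
      H (i + 1) = H i -
        (w i ⬝ᵥ (H i *ᵥ a i))⁻¹ • vecMulVec (H i *ᵥ a i) ((H i)ᵀ *ᵥ w i))
    (hα : ∀ i, 1 ≤ i → α i = (a i ⬝ᵥ x i - b i) / (a i ⬝ᵥ p i))
    (hrecx : ∀ i, 1 ≤ i → x (i + 1) = x i - α i • p i) :
    ∀ i, 1 ≤ i → ∀ j, 1 ≤ j → j ≤ i → a j ⬝ᵥ x (i + 1) = b j := by
  have hap : ∀ i, 1 ≤ i → a i ⬝ᵥ p i = z i ⬝ᵥ (H i *ᵥ a i) := by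
    intro i hi
    rw [hp i hi, dotProduct_mulVec, ← mulVec_transpose, transpose_transpose,
      dotProduct_comm]
  intro i
  induction i with
  | zero => omega
  | succ k ih =>
    intro hk j hj1 hji
    rcases eq_or_lt_of_le hji with h | h
    · -- j = k+1
      subst h
      rw [hrecx (k+1) hk, dotProduct_sub, dotProduct_smul, hα (k+1) hk, smul_eq_mul,
        div_mul_cancel₀]
      · ring
      · rw [hap (k+1) hk]; exact hz (k+1) hk
    · -- j ≤ k
      have hjk : j ≤ k := by omega
      have hk0 : 1 ≤ k := by omega
      have hkey : H (k + 1) *ᵥ a j = 0 := by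
        rcases Nat.exists_eq_add_of_le hk0 with ⟨m, rfl⟩
        exact abs_key H a w hw hrecH (1 + m) (by omega) j hj1 hjk
      have hajp : a j ⬝ᵥ p (k + 1) = 0 := by
        rw [hp (k+1) (by omega), dotProduct_mulVec, ← mulVec_transpose,
          transpose_transpose, dotProduct_comm, hkey, dotProduct_zero]
      rw [hrecx (k+1) (by omega), dotProduct_sub, dotProduct_smul, smul_eq_mul,
        hajp, mul_zero, sub_zero]
      exact ih hk0 j hj1 hjk
end
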